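/- Under the instrumental variable assumptions (randomized instrument, exclusion restriction encoded via the potential-outcome consistency equations, monotonicity, relevance, and homogeneity), the average causal effect equals the Wald ratio: ( E[Y·1{Z=1}]/P(Z=1) − E[Y·1{Z=0}]/P(Z=0) ) / ( E[A·1{Z=1}]/P(Z=1) − E[A·1{Z=0}]/P(Z=0) ) = β, and β = E[Y_1 − Y_0]. -/

import Mathlib

/-!
Homogeneity gives `Y = Y₀ + β A` almost surely, so on the arm `Z = z` the observed `A` and `Y`
coincide with `A_z` and `Y₀ + β A_z`. These are functions of the potential outcomes, hence
independent of `Z`, so each arm mean is an unconditional mean: the Wald numerator is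
`β (E A₁ - E A₀)` and the denominator `E A₁ - E A₀`, which relevance makes nonzero.
-/

open MeasureTheory ProbabilityTheory

section ArmMeans

variable {Ω : Type*} [MeasurableSpace Ω] {μ : Measure Ω} {Z U V X : Ω → ℝ}

lemma integral_eq_measureReal_of_zero_or_one (hZ : Measurable Z)
    (hZ01 : ∀ ω, Z ω = 0 ∨ Z ω = 1) : ∫ ω, Z ω ∂μ = μ.real {ω | Z ω = 1} := by
  calc ∫ ω, Z ω ∂μ = ∫ ω, (Z ⁻¹' {1}).indicator 1 ω ∂μ :=
        integral_congr_ae <| ae_of_all _ fun ω => by rcases hZ01 ω with h | h <;> simp [h]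
    _ = μ.real {ω | Z ω = 1} := integral_indicator_one (hZ (measurableSet_singleton 1))

lemma integrable_of_zero_or_one [IsFiniteMeasure μ] (hZ : AEStronglyMeasurable Z μ)
    (hZ01 : ∀ ω, Z ω = 0 ∨ Z ω = 1) : Integrable Z μ :=
  .of_bound hZ 1 <| ae_of_all _ fun ω => by rcases hZ01 ω with h | h <;> simp [h]

lemma integral_mul_div_integral_of_indepFun (hZU : IndepFun Z U μ)
    (hZ : AEStronglyMeasurable Z μ) (hU : AEStronglyMeasurable U μ) (h : ∫ ω, Z ω ∂μ ≠ 0) :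
    (∫ ω, U ω * Z ω ∂μ) / ∫ ω, Z ω ∂μ = ∫ ω, U ω ∂μ := by
  have := hZU.integral_mul_eq_mul_integral hZ hU
  simp only [Pi.mul_apply] at this
  simp_rw [mul_comm (U _), this]
  field_simp

lemma integral_mul_div_integral_of_ae_eq_select (hZ01 : ∀ ω, Z ω = 0 ∨ Z ω = 1)
    (hX : X =ᵐ[μ] fun ω => Z ω * U ω + (1 - Z ω) * V ω) (hZU : IndepFun Z U μ)
    (hZ : AEStronglyMeasurable Z μ) (hU : AEStronglyMeasurable U μ) (h : ∫ ω, Z ω ∂μ ≠ 0) :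
    (∫ ω, X ω * Z ω ∂μ) / ∫ ω, Z ω ∂μ = ∫ ω, U ω ∂μ := by
  have hXZ : ∫ ω, X ω * Z ω ∂μ = ∫ ω, U ω * Z ω ∂μ := by
    refine integral_congr_ae ?_
    filter_upwards [hX] with ω hω
    rcases hZ01 ω with h | h <;> simp [hω, h]
  rw [hXZ, integral_mul_div_integral_of_indepFun hZU hZ hU h]

lemma integral_mul_one_sub_div_of_ae_eq_select [IsProbabilityMeasure μ]
    (hZ01 : ∀ ω, Z ω = 0 ∨ Z ω = 1)
    (hX : X =ᵐ[μ] fun ω => Z ω * U ω + (1 - Z ω) * V ω) (hZV : IndepFun Z V μ)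
    (hZ : Integrable Z μ) (hV : AEStronglyMeasurable V μ) (h : ∫ ω, Z ω ∂μ ≠ 1) :
    (∫ ω, X ω * (1 - Z ω) ∂μ) / (1 - ∫ ω, Z ω ∂μ) = ∫ ω, V ω ∂μ := by
  have hE : ∫ ω, (1 - Z ω) ∂μ = 1 - ∫ ω, Z ω ∂μ := by
    rw [integral_sub (integrable_const 1) hZ, integral_const, probReal_univ, one_smul]
  rw [← hE]
  refine integral_mul_div_integral_of_ae_eq_select (U := V) (V := U)
    (fun ω => by rcases hZ01 ω with h | h <;> simp [h]) ?_
    (hZV.comp (measurable_const.sub measurable_id) measurable_id)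
    (aestronglyMeasurable_const.sub hZ.aestronglyMeasurable) hV (hE ▸ sub_ne_zero.2 h.symm)
  filter_upwards [hX] with ω hω
  rw [hω]
  ring

end ArmMeans

theorem iv_wald_identification_general
    {Ω : Type*} [MeasurableSpace Ω]
    (Pr : Measure Ω) [IsProbabilityMeasure Pr]
    (Z : Ω → ℝ) (hZ : Measurable Z) (hZ01 : ∀ ω, Z ω = 0 ∨ Z ω = 1)
    (A0 A1 : Ω → ℝ) (hA0 : Measurable A0) (hA1 : Measurable A1)
    (hA001 : ∀ ω, A0 ω = 0 ∨ A0 ω = 1) (hA101 : ∀ ω, A1 ω = 0 ∨ A1 ω = 1)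
    (Y0 Y1 : Ω → ℝ)
    (hY0 : Integrable Y0 Pr)
    -- consistency
    (A : Ω → ℝ) (hAdef : A = fun ω => Z ω * A1 ω + (1 - Z ω) * A0 ω)
    (Y : Ω → ℝ) (hYdef : Y = fun ω => A ω * Y1 ω + (1 - A ω) * Y0 ω)
    -- randomization: Z is independent of (A₀, A₁, Y₀, Y₁)
    (hrand : IndepFun Z (fun ω => (A0 ω, A1 ω, Y0 ω, Y1 ω)) Pr)
    -- relevance
    (hrel : ∫ ω, (A1 ω - A0 ω) ∂Pr ≠ 0)
    -- homogeneity
    (β : ℝ) (hhom : ∀ᵐ ω ∂Pr, Y1 ω - Y0 ω = β)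
    -- positivity
    (ζ : ℝ) (hζ : ζ = (Pr {ω | Z ω = 1}).toReal) (hζ0 : 0 < ζ) (hζ1 : ζ < 1) :
    ((∫ ω, Y ω * Z ω ∂Pr) / ζ - (∫ ω, Y ω * (1 - Z ω) ∂Pr) / (1 - ζ))
        / ((∫ ω, A ω * Z ω ∂Pr) / ζ - (∫ ω, A ω * (1 - Z ω) ∂Pr) / (1 - ζ)) = β
      ∧ β = ∫ ω, (Y1 ω - Y0 ω) ∂Pr := by
  have hZint := integrable_of_zero_or_one (μ := Pr) hZ.aestronglyMeasurable hZ01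
  have hA0int := integrable_of_zero_or_one (μ := Pr) hA0.aestronglyMeasurable hA001
  have hA1int := integrable_of_zero_or_one (μ := Pr) hA1.aestronglyMeasurable hA101
  have hEZ : ∫ ω, Z ω ∂Pr = ζ := by
    rw [hζ, integral_eq_measureReal_of_zero_or_one hZ hZ01, measureReal_def]
  have hindep (g : ℝ × ℝ × ℝ × ℝ → ℝ) (hg : Measurable g) :
      IndepFun Z (fun ω => g (A0 ω, A1 ω, Y0 ω, Y1 ω)) Pr :=
    hrand.comp measurable_id hg
  have hA : A =ᵐ[Pr] fun ω => Z ω * A1 ω + (1 - Z ω) * A0 ω := .of_eq hAdef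
  have hY : Y =ᵐ[Pr] fun ω => Z ω * (Y0 ω + β * A1 ω) + (1 - Z ω) * (Y0 ω + β * A0 ω) := by
    filter_upwards [hhom] with ω hω
    subst hYdef hAdef
    linear_combination (Z ω * A1 ω + (1 - Z ω) * A0 ω) * hω
  have hEZ0 : ∫ ω, Z ω ∂Pr ≠ 0 := hEZ ▸ hζ0.ne'
  have hEZ1 : ∫ ω, Z ω ∂Pr ≠ 1 := hEZ ▸ hζ1.ne
  have hY_treated := integral_mul_div_integral_of_ae_eq_select hZ01 hY
    (hindep (fun p => p.2.2.1 + β * p.2.1) (by fun_prop)) hZint.1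
    (hY0.add (hA1int.const_mul β)).1 hEZ0
  have hY_control := integral_mul_one_sub_div_of_ae_eq_select hZ01 hY
    (hindep (fun p => p.2.2.1 + β * p.1) (by fun_prop)) hZint (hY0.add (hA0int.const_mul β)).1 hEZ1
  have hA_treated := integral_mul_div_integral_of_ae_eq_select hZ01 hA
    (hindep (fun p => p.2.1) (by fun_prop)) hZint.1 hA1int.1 hEZ0
  have hA_control := integral_mul_one_sub_div_of_ae_eq_select hZ01 hA
    (hindep (fun p => p.1) (by fun_prop)) hZint hA0int.1 hEZ1
  rw [hEZ] at hY_treated hY_control hA_treated hA_control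
  have hdiff : ∫ ω, A1 ω ∂Pr - ∫ ω, A0 ω ∂Pr ≠ 0 := by rwa [← integral_sub hA1int hA0int]
  refine ⟨?_, ?_⟩
  · rw [hY_treated, hY_control, hA_treated, hA_control, integral_add hY0 (hA1int.const_mul β),
      integral_add hY0 (hA0int.const_mul β), integral_const_mul, integral_const_mul]
    field_simp
    ring
  · rw [integral_congr_ae hhom]
    simp

/-- **Identification of the average causal effect by the Wald (IV) ratio.**
Under consistency (`A = Z·A₁ + (1-Z)·A₀`, `Y = A·Y₁ + (1-A)·Y₀`), randomization of the
instrument (`Z ⫫ (A₀, A₁, Y₀, Y₁)`), monotonicity (`A₀ ≤ A₁` a.s.), relevance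
(`E[A₁ - A₀] ≠ 0`), homogeneity (`Y₁ - Y₀ = β` a.s.), and positivity (`0 < P(Z=1) < 1`),
the Wald ratio equals `β` and `β = E[Y₁ - Y₀]`.
(Since `Z` is `{0,1}`-valued, `1{Z=1} = Z` and `1{Z=0} = 1 - Z`, and `P(Z=0) = 1 - ζ`.) -/
theorem iv_wald_identification
    {Ω : Type*} [MeasurableSpace Ω]
    (Pr : Measure Ω) [IsProbabilityMeasure Pr]
    (Z : Ω → ℝ) (hZ : Measurable Z) (hZ01 : ∀ ω, Z ω = 0 ∨ Z ω = 1)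
    (A0 A1 : Ω → ℝ) (hA0 : Measurable A0) (hA1 : Measurable A1)
    (hA001 : ∀ ω, A0 ω = 0 ∨ A0 ω = 1) (hA101 : ∀ ω, A1 ω = 0 ∨ A1 ω = 1)
    (Y0 Y1 : Ω → ℝ) (hY0m : Measurable Y0) (hY1m : Measurable Y1)
    (hY0 : Integrable Y0 Pr) (hY1 : Integrable Y1 Pr)
    -- consistency
    (A : Ω → ℝ) (hAdef : A = fun ω => Z ω * A1 ω + (1 - Z ω) * A0 ω)
    (Y : Ω → ℝ) (hYdef : Y = fun ω => A ω * Y1 ω + (1 - A ω) * Y0 ω)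
    -- randomization: Z is independent of (A₀, A₁, Y₀, Y₁)
    (hrand : IndepFun Z (fun ω => (A0 ω, A1 ω, Y0 ω, Y1 ω)) Pr)
    -- monotonicity
    (hmono : ∀ᵐ ω ∂Pr, A0 ω ≤ A1 ω)
    -- relevance
    (hrel : ∫ ω, (A1 ω - A0 ω) ∂Pr ≠ 0)
    -- homogeneity
    (β : ℝ) (hhom : ∀ᵐ ω ∂Pr, Y1 ω - Y0 ω = β)
    -- positivity
    (ζ : ℝ) (hζ : ζ = (Pr {ω | Z ω = 1}).toReal) (hζ0 : 0 < ζ) (hζ1 : ζ < 1) :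
    ((∫ ω, Y ω * Z ω ∂Pr) / ζ - (∫ ω, Y ω * (1 - Z ω) ∂Pr) / (1 - ζ))
        / ((∫ ω, A ω * Z ω ∂Pr) / ζ - (∫ ω, A ω * (1 - Z ω) ∂Pr) / (1 - ζ)) = β
      ∧ β = ∫ ω, (Y1 ω - Y0 ω) ∂Pr :=
  iv_wald_identification_general Pr Z hZ hZ01 A0 A1 hA0 hA1 hA001 hA101 Y0 Y1 hY0 A hAdef Y hYdef
    hrand hrel β hhom ζ hζ hζ0 hζ1
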